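/- Let f be a bi-starlike function of order 1/2, i.e. f ∈ S*_Σ(1/2). Then the pre-Schwarzian norm of f satisfies ||f|| ≤ 4. -/

import Mathlib

open Metric Set Filter Complex
open scoped Topology

noncomputable def mob (u ζ : ℂ) : ℂ := (ζ + u) / (1 + (starRingEnd ℂ) u * ζ)

lemma mob_den_ne {u ζ : ℂ} (hu : ‖u‖ < 1) (hζ : ‖ζ‖ < 1) :
    1 + (starRingEnd ℂ) u * ζ ≠ 0 := by
  intro h
  have h1 : (starRingEnd ℂ) u * ζ = -1 := by linear_combination h
  have : ‖(starRingEnd ℂ) u * ζ‖ = 1 := by rw [h1]; simp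
  rw [norm_mul, RCLike.norm_conj] at this
  nlinarith [norm_nonneg u, norm_nonneg ζ]

lemma mob_normSq_identity (u ζ : ℂ) :
    Complex.normSq (1 + (starRingEnd ℂ) u * ζ) - Complex.normSq (ζ + u)
      = (1 - Complex.normSq u) * (1 - Complex.normSq ζ) := by
  simp only [Complex.normSq_apply, Complex.add_re, Complex.add_im, Complex.mul_re,
    Complex.mul_im, Complex.conj_re, Complex.conj_im, Complex.one_re, Complex.one_im]
  ring

lemma normSq_norm_sq (z : ℂ) : Complex.normSq z = ‖z‖ ^ 2 := by
  rw [Complex.sq_norm]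

lemma mob_mapsTo {u ζ : ℂ} (hu : ‖u‖ < 1) (hζ : ‖ζ‖ < 1) : ‖mob u ζ‖ < 1 := by
  have hden := mob_den_ne hu hζ
  have hid := mob_normSq_identity u ζ
  have h1 : Complex.normSq u < 1 := by rw [normSq_norm_sq]; nlinarith [norm_nonneg u]
  have h2 : Complex.normSq ζ < 1 := by rw [normSq_norm_sq]; nlinarith [norm_nonneg ζ]
  have h3 : 0 < Complex.normSq (1 + (starRingEnd ℂ) u * ζ) := Complex.normSq_pos.2 hden
  have h4 : ‖mob u ζ‖ ^ 2 < 1 := by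
    rw [mob, norm_div, div_pow, ← normSq_norm_sq, ← normSq_norm_sq]
    rw [div_lt_one h3]
    nlinarith
  nlinarith [norm_nonneg (mob u ζ)]

lemma mob_hasDerivAt {u ζ : ℂ} (h : 1 + (starRingEnd ℂ) u * ζ ≠ 0) :
    HasDerivAt (mob u)
      (((1 + (starRingEnd ℂ) u * ζ) - (ζ + u) * (starRingEnd ℂ) u)
        / (1 + (starRingEnd ℂ) u * ζ) ^ 2) ζ := by
  have h1 : HasDerivAt (fun z : ℂ => z + u) 1 ζ := (hasDerivAt_id ζ).add_const u
  have h2 : HasDerivAt (fun z : ℂ => 1 + (starRingEnd ℂ) u * z) ((starRingEnd ℂ) u) ζ := by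
    simpa using ((hasDerivAt_id ζ).const_mul ((starRingEnd ℂ) u)).const_add 1
  have := h1.div h2 h
  rw [one_mul] at this
  exact this

lemma mob_zero (u : ℂ) : mob u 0 = u := by simp [mob]

/-- Schwarz–Pick lemma. -/
lemma schwarz_pick {w : ℂ → ℂ} (hd : ∀ z ∈ ball (0:ℂ) 1, DifferentiableAt ℂ w z)
    (hm : ∀ z ∈ ball (0:ℂ) 1, ‖w z‖ < 1) {a : ℂ} (ha : ‖a‖ < 1) :
    ‖deriv w a‖ * (1 - ‖a‖ ^ 2) ≤ 1 - ‖w a‖ ^ 2 := by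
  set b := w a with hb
  have hamem : a ∈ ball (0:ℂ) 1 := by simpa [mem_ball, dist_eq_norm] using ha
  have hbn : ‖b‖ < 1 := hm a hamem
  -- the composition
  set h : ℂ → ℂ := (mob (-b)) ∘ (w ∘ (mob a)) with hh
  have hφmem : ∀ z ∈ ball (0:ℂ) 1, mob a z ∈ ball (0:ℂ) 1 := by
    intro z hz
    simp only [mem_ball, dist_eq_norm, sub_zero] at hz ⊢
    exact mob_mapsTo ha hz
  have hmaps : MapsTo h (ball (0:ℂ) 1) (ball (0:ℂ) 1) := by
    intro z hz
    have h1 := hφmem z hz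
    have h2 : ‖w (mob a z)‖ < 1 := hm _ h1
    simp only [mem_ball, dist_eq_norm, sub_zero, hh, Function.comp_apply]
    exact mob_mapsTo (by simpa using hbn) h2
  have hdiff : DifferentiableOn ℂ h (ball (0:ℂ) 1) := by
    intro z hz
    simp only [mem_ball, dist_eq_norm, sub_zero] at hz
    have d1 : DifferentiableAt ℂ (mob a) z := (mob_hasDerivAt (mob_den_ne ha hz)).differentiableAt
    have d2 : DifferentiableAt ℂ w (mob a z) := hd _ (hφmem z (by simpa [mem_ball, dist_eq_norm]))
    have d3 : DifferentiableAt ℂ (mob (-b)) (w (mob a z)) := by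
      refine (mob_hasDerivAt ?_).differentiableAt
      exact mob_den_ne (by simpa using hbn) (hm _ (hφmem z (by simpa [mem_ball, dist_eq_norm])))
    exact ((d3.comp z (d2.comp z d1))).differentiableWithinAt
  have hzero : h 0 = 0 := by
    simp only [hh, Function.comp_apply, mob_zero, ← hb, mob]
    simp [hb]
  -- derivative of h at 0
  have hφ' : HasDerivAt (mob a) (1 - (starRingEnd ℂ) a * a) 0 := by
    have := mob_hasDerivAt (u := a) (ζ := 0) (by simpa using mob_den_ne ha (by simp))
    simp only [mul_zero, add_zero, zero_add, one_pow, div_one] at this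
    convert this using 1
    ring
  have hw' : HasDerivAt w (deriv w a) (mob a 0) := by
    rw [mob_zero]; exact (hd a hamem).hasDerivAt
  have hψ' : HasDerivAt (mob (-b)) ((1 - (starRingEnd ℂ) b * b)⁻¹) (w (mob a 0)) := by
    rw [mob_zero, ← hb]
    have hden : 1 + (starRingEnd ℂ) (-b) * b ≠ 0 := mob_den_ne (by simpa using hbn) hbn
    have := mob_hasDerivAt (u := -b) (ζ := b) hden
    have hden' : 1 - (starRingEnd ℂ) b * b ≠ 0 := by
      intro hc; apply hden; rw [map_neg]; linear_combination hc
    have he : ((1 + (starRingEnd ℂ) (-b) * b) - (b + -b) * (starRingEnd ℂ) (-b))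
        / (1 + (starRingEnd ℂ) (-b) * b) ^ 2 = (1 - (starRingEnd ℂ) b * b)⁻¹ := by
      rw [map_neg, show (b + -b) = 0 by ring, zero_mul, sub_zero,
        show (1 + -(starRingEnd ℂ) b * b) = 1 - (starRingEnd ℂ) b * b by ring,
        pow_two, ← div_div, div_self hden', one_div]
    rwa [he] at this
  have hD : HasDerivAt h ((1 - (starRingEnd ℂ) b * b)⁻¹ * (deriv w a * (1 - (starRingEnd ℂ) a * a))) 0 :=
    hψ'.comp 0 (hw'.comp 0 hφ')
  have hbound : ‖deriv h 0‖ ≤ 1 := by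
    have := Complex.norm_deriv_le_div_of_mapsTo_ball (c := 0) (R₁ := 1) (R₂ := 1)
      hdiff (by rw [hzero]; exact hmaps.mono_right ball_subset_closedBall) one_pos
    simpa using this
  rw [hD.deriv] at hbound
  have e1 : (starRingEnd ℂ) b * b = ((‖b‖ ^ 2 : ℝ) : ℂ) := by
    rw [mul_comm, Complex.mul_conj, normSq_norm_sq]
  have e2 : (starRingEnd ℂ) a * a = ((‖a‖ ^ 2 : ℝ) : ℂ) := by
    rw [mul_comm, Complex.mul_conj, normSq_norm_sq]
  rw [e1, e2, norm_mul, norm_mul, norm_inv] at hbound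
  have n1 : ‖(1 : ℂ) - ((‖b‖ ^ 2 : ℝ) : ℂ)‖ = 1 - ‖b‖ ^ 2 := by
    rw [show (1 : ℂ) - ((‖b‖ ^ 2 : ℝ) : ℂ) = (((1 - ‖b‖ ^ 2 : ℝ)) : ℂ) by push_cast; ring,
      Complex.norm_real, Real.norm_eq_abs, _root_.abs_of_nonneg (by nlinarith [norm_nonneg b])]
  have n2 : ‖(1 : ℂ) - ((‖a‖ ^ 2 : ℝ) : ℂ)‖ = 1 - ‖a‖ ^ 2 := by
    rw [show (1 : ℂ) - ((‖a‖ ^ 2 : ℝ) : ℂ) = (((1 - ‖a‖ ^ 2 : ℝ)) : ℂ) by push_cast; ring,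
      Complex.norm_real, Real.norm_eq_abs, _root_.abs_of_nonneg (by nlinarith [norm_nonneg a])]
  rw [n1, n2] at hbound
  have hb1 : (0:ℝ) < 1 - ‖b‖ ^ 2 := by nlinarith [norm_nonneg b]
  rw [inv_mul_le_iff₀ (by positivity)] at hbound
  linarith

lemma norm_one_sub_inv_lt {p : ℂ} (hp : (1/2 : ℝ) < p.re) : ‖1 - p⁻¹‖ < 1 := by
  have hpne : p ≠ 0 := by intro hc; rw [hc] at hp; norm_num at hp
  have hpn : (0:ℝ) < ‖p‖ := norm_pos_iff.2 hpne
  have h2 : ‖p - 1‖ ^ 2 < ‖p‖ ^ 2 := by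
    rw [Complex.sq_norm, Complex.sq_norm]
    simp only [Complex.normSq_apply, Complex.sub_re, Complex.sub_im, Complex.one_re,
      Complex.one_im]
    nlinarith
  have h3 : ‖p - 1‖ < ‖p‖ := by nlinarith [norm_nonneg (p - 1), norm_nonneg p]
  have he : 1 - p⁻¹ = (p - 1) * p⁻¹ := by field_simp
  rw [he, norm_mul, norm_inv]
  calc ‖p - 1‖ * ‖p‖⁻¹ < ‖p‖ * ‖p‖⁻¹ := by
        exact mul_lt_mul_of_pos_right h3 (by positivity)
    _ = 1 := mul_inv_cancel₀ hpn.ne'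

/-- If `f` is bi-starlike of order `1/2`, then its pre-Schwarzian norm is at most `4`. -/
theorem preSchwarzian_norm_bound_bi_starlike_order_half
    (f g : ℂ → ℂ)
    (hf : AnalyticOnNhd ℂ f (Metric.ball (0:ℂ) 1))
    (hf0 : f 0 = 0) (hf'0 : deriv f 0 = 1)
    (hinj : Set.InjOn f (Metric.ball (0:ℂ) 1))
    (hg : AnalyticOnNhd ℂ g (Metric.ball (0:ℂ) 1))
    (hg0 : g 0 = 0)
    (hfg : ∀ w : ℂ, ‖w‖ < 1/4 → f (g w) = w)
    (hstar : ∀ z : ℂ, ‖z‖ < 1 → z ≠ 0 → (1/2 : ℝ) < (z * deriv f z / f z).re)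
    (hstar' : ∀ w : ℂ, ‖w‖ < 1 → w ≠ 0 → (1/2 : ℝ) < (w * deriv g w / g w).re) :
    ∀ z : ℂ, ‖z‖ < 1 →
      (1 - ‖z‖ ^ 2) * ‖deriv (deriv f) z / deriv f z‖ ≤ 4 := by
  have h0B : (0:ℂ) ∈ ball (0:ℂ) 1 := by simp
  have hf'A : AnalyticOnNhd ℂ (deriv f) (ball (0:ℂ) 1) := hf.deriv
  have hf''A : AnalyticOnNhd ℂ (deriv (deriv f)) (ball (0:ℂ) 1) := hf'A.deriv
  have hdne : ∀ z ∈ ball (0:ℂ) 1, deriv f z ≠ 0 := by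
    intro z hz
    rcases eq_or_ne z 0 with rfl | hz0
    · rw [hf'0]; exact one_ne_zero
    · intro hc
      have := hstar z (mem_ball_zero_iff.1 hz) hz0
      rw [hc, mul_zero, zero_div] at this
      norm_num at this
  -- the auxiliary function w
  set w : ℂ → ℂ := fun z => if z = 0 then 0 else 1 - f z / (z * deriv f z) with hwdef
  have hw0 : w 0 = 0 := if_pos rfl
  have hwlt : ∀ z ∈ ball (0:ℂ) 1, ‖w z‖ < 1 := by
    intro z hz
    rcases eq_or_ne z 0 with rfl | hz0
    · rw [hw0]; norm_num
    · have hp := hstar z (mem_ball_zero_iff.1 hz) hz0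
      have hwz : w z = 1 - (z * deriv f z / f z)⁻¹ := by
        rw [hwdef]; simp only [if_neg hz0, inv_div]
      rw [hwz]
      exact norm_one_sub_inv_lt hp
  have hne0case : ∀ z ∈ ball (0:ℂ) 1, z ≠ 0 → DifferentiableAt ℂ w z := by
    intro z hz hz0
    have hev : (fun ζ : ℂ => 1 - f ζ / (ζ * deriv f ζ)) =ᶠ[𝓝 z] w := by
      filter_upwards [isOpen_compl_singleton.mem_nhds hz0] with ζ hζ
      rw [hwdef]
      simp only [if_neg (Set.mem_compl_singleton_iff.1 hζ)]
    refine hev.differentiableAt_iff.1 ?_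
    exact (differentiableAt_const 1).sub
      (((hf z hz).differentiableAt).div
        (differentiableAt_id.mul (hf'A z hz).differentiableAt)
        (mul_ne_zero hz0 (hdne z hz)))
  have hwdiff : ∀ z ∈ ball (0:ℂ) 1, DifferentiableAt ℂ w z := by
    intro z hz
    rcases eq_or_ne z 0 with rfl | hz0
    · -- removable singularity at 0
      have t1 : Tendsto (fun ζ : ℂ => f ζ / ζ) (𝓝[≠] (0:ℂ)) (𝓝 1) := by
        have hd : HasDerivAt f (deriv f 0) 0 := ((hf 0 h0B).differentiableAt).hasDerivAt
        rw [hasDerivAt_iff_tendsto_slope, hf'0] at hd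
        refine hd.congr' ?_
        filter_upwards [self_mem_nhdsWithin] with ζ hζ
        rw [slope_def_field, hf0, sub_zero, sub_zero]
      have t2 : Tendsto (deriv f) (𝓝[≠] (0:ℂ)) (𝓝 1) := by
        have := ((hf'A 0 h0B).continuousAt).tendsto
        rw [hf'0] at this
        exact this.mono_left nhdsWithin_le_nhds
      have t4 : Tendsto (fun ζ : ℂ => 1 - (f ζ / ζ) / deriv f ζ) (𝓝[≠] (0:ℂ))
          (𝓝 (1 - 1 / 1)) := tendsto_const_nhds.sub (t1.div t2 one_ne_zero)
      norm_num at t4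
      have t3 : Tendsto w (𝓝[≠] (0:ℂ)) (𝓝 0) := by
        refine t4.congr' ?_
        filter_upwards [self_mem_nhdsWithin] with ζ hζ
        rw [hwdef]
        simp only [if_neg (Set.mem_compl_singleton_iff.1 hζ)]
        rw [div_div]
      have hcont : ContinuousAt w 0 := by
        have tp : Tendsto w (pure (0:ℂ)) (𝓝 0) :=
          tendsto_pure_left.2 fun s hs => by rw [hw0]; exact mem_of_mem_nhds hs
        have := t3.sup tp
        rw [nhdsNE_sup_pure] at this
        rw [ContinuousAt, hw0]
        exact this
      have hpn : ∀ᶠ ζ in 𝓝[≠] (0:ℂ), DifferentiableAt ℂ w ζ := by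
        filter_upwards [nhdsWithin_le_nhds (Metric.ball_mem_nhds (0:ℂ) one_pos),
          self_mem_nhdsWithin] with ζ hζ hζ0
        exact hne0case ζ hζ (Set.mem_compl_singleton_iff.1 hζ0)
      exact (Complex.analyticAt_of_differentiable_on_punctured_nhds_of_continuousAt
        hpn hcont).differentiableAt
    · exact hne0case z hz hz0
  -- Schwarz lemma
  have hschwarz : ∀ z ∈ ball (0:ℂ) 1, ‖w z‖ ≤ ‖z‖ := by
    intro z hz
    have := Complex.norm_le_norm_of_mapsTo_ball (R := 1) (f := w)
      (fun ζ hζ => (hwdiff ζ hζ).differentiableWithinAt)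
      (fun ζ hζ => ball_subset_closedBall (mem_ball_zero_iff.2 (hwlt ζ hζ))) hw0
      (z := z) (mem_ball_zero_iff.1 hz)
    exact this
  -- key bound on the punctured ball
  have main : ∀ z ∈ ball (0:ℂ) 1, z ≠ 0 →
      (1 - ‖z‖ ^ 2) * ‖deriv (deriv f) z / deriv f z‖ ≤ 4 := by
    intro z hz hz0
    have hr1 : ‖z‖ < 1 := mem_ball_zero_iff.1 hz
    have hr0 : (0:ℝ) < ‖z‖ := norm_pos_iff.2 hz0
    have hsp : ‖deriv w z‖ * (1 - ‖z‖ ^ 2) ≤ 1 - ‖w z‖ ^ 2 :=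
      schwarz_pick hwdiff hwlt hr1
    have hsr : ‖w z‖ ≤ ‖z‖ := hschwarz z hz
    -- derivative identity
    have hev : f =ᶠ[𝓝 z] (fun ζ => ζ * deriv f ζ * (1 - w ζ)) := by
      filter_upwards [isOpen_ball.mem_nhds hz, isOpen_compl_singleton.mem_nhds hz0]
        with ζ hζB hζ0
      replace hζ0 : ζ ≠ 0 := Set.mem_compl_singleton_iff.1 hζ0
      rw [hwdef]
      simp only [if_neg hζ0]
      rw [show (1 : ℂ) - (1 - f ζ / (ζ * deriv f ζ)) = f ζ / (ζ * deriv f ζ) by ring,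
        mul_comm, div_mul_cancel₀ _ (mul_ne_zero hζ0 (hdne ζ hζB))]
    have hFd : HasDerivAt (fun ζ => ζ * deriv f ζ * (1 - w ζ))
        ((1 * deriv f z + z * deriv (deriv f) z) * (1 - w z)
          + (z * deriv f z) * (0 - deriv w z)) z :=
      ((hasDerivAt_id z).mul ((hf'A z hz).differentiableAt.hasDerivAt)).mul
        ((hasDerivAt_const z (1:ℂ)).sub ((hwdiff z hz).hasDerivAt))
    have hEq : deriv f z = (1 * deriv f z + z * deriv (deriv f) z) * (1 - w z)
        + (z * deriv f z) * (0 - deriv w z) := by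
      rw [← hFd.deriv]
      exact hev.deriv_eq
    have hkey : z * deriv (deriv f) z * (1 - w z)
        = deriv f z * (w z + z * deriv w z) := by linear_combination -hEq
    have hnkey : ‖z‖ * ‖deriv (deriv f) z‖ * ‖1 - w z‖
        = ‖deriv f z‖ * ‖w z + z * deriv w z‖ := by
      have := congrArg norm hkey
      simpa [norm_mul] using this
    have hd1 : 1 - ‖w z‖ ≤ ‖1 - w z‖ := by
      have := norm_sub_norm_le (1:ℂ) (w z)
      simpa using this
    have hA : ‖w z + z * deriv w z‖ ≤ ‖w z‖ + ‖z‖ * ‖deriv w z‖ := by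
      refine (norm_add_le _ _).trans ?_
      rw [norm_mul]
    have hY : (0:ℝ) < ‖deriv f z‖ := norm_pos_iff.2 (hdne z hz)
    set r := ‖z‖; set s := ‖w z‖; set W := ‖deriv w z‖
    set X := ‖deriv (deriv f) z‖; set Y := ‖deriv f z‖
    set A := ‖w z + z * deriv w z‖; set d := ‖1 - w z‖
    have hs0 : (0:ℝ) ≤ s := norm_nonneg _
    have hW0 : (0:ℝ) ≤ W := norm_nonneg _
    have hX0 : (0:ℝ) ≤ X := norm_nonneg _
    have hA0 : (0:ℝ) ≤ A := norm_nonneg _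
    have hr2 : (0:ℝ) ≤ 1 - r ^ 2 := by nlinarith
    have h1 : (1 - r ^ 2) * A ≤ (1 - r ^ 2) * s + r * (1 - s ^ 2) := by
      nlinarith [mul_le_mul_of_nonneg_left hA hr2, mul_le_mul_of_nonneg_left hsp hr0.le]
    have h2 : (1 - r ^ 2) * s + r * (1 - s ^ 2) ≤ 4 * (r * (1 - s)) := by
      nlinarith [mul_nonneg (sub_nonneg.2 hsr) (sub_nonneg.2 hr1.le),
        mul_nonneg hr0.le (sq_nonneg (1 - r)), sq_nonneg (r - s)]
    have hds : 0 < d := lt_of_lt_of_le (by nlinarith [hwlt z hz]) hd1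
    have h3 : ((1 - r ^ 2) * X) * (r * d) ≤ (4 * Y) * (r * d) := by
      have e1 : ((1 - r ^ 2) * X) * (r * d) = (1 - r ^ 2) * (Y * A) := by
        rw [show Y * A = r * X * d from hnkey.symm]; ring
      rw [e1]
      calc (1 - r ^ 2) * (Y * A) = Y * ((1 - r ^ 2) * A) := by ring
        _ ≤ Y * (4 * (r * (1 - s))) := by
            exact mul_le_mul_of_nonneg_left (h1.trans h2) hY.le
        _ ≤ (4 * Y) * (r * d) := by nlinarith [mul_le_mul_of_nonneg_left hd1 hY.le]
    have h4 : (1 - r ^ 2) * X ≤ 4 * Y := le_of_mul_le_mul_right h3 (by positivity)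
    rw [norm_div, mul_div_assoc', div_le_iff₀ hY]
    linarith
  -- conclude
  intro z₀ hz₀
  rcases eq_or_ne z₀ 0 with rfl | h0
  · have hc : ContinuousAt
        (fun z : ℂ => (1 - ‖z‖ ^ 2) * ‖deriv (deriv f) z / deriv f z‖) 0 := by
      apply ContinuousAt.mul
      · exact (continuous_const.sub (continuous_norm.pow 2)).continuousAt
      · exact (((hf''A 0 h0B).continuousAt).div ((hf'A 0 h0B).continuousAt)
          (by rw [hf'0]; exact one_ne_zero)).norm
    refine le_of_tendsto (hc.tendsto.mono_left (nhdsWithin_le_nhds : 𝓝[≠] (0:ℂ) ≤ 𝓝 0)) ?_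
    filter_upwards [nhdsWithin_le_nhds (Metric.ball_mem_nhds (0:ℂ) one_pos),
      self_mem_nhdsWithin] with z hzB hz0
    exact main z hzB (Set.mem_compl_singleton_iff.1 hz0)
  · exact main z₀ (mem_ball_zero_iff.2 hz₀) h0
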